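/- For every m ≥ 4, the element α = Σ_{j=1}^{m} (2m - 3j)·v_{2j}·w_{4m-(2j+1)} of ʳΩ_3^{4m-1,1}(CP^m) is a cocycle: ∂(α) = 0 in the reduced complex ʳΩ_3^{*,*}(CP^m). -/
import Mathlib


/-!
# The (reduced) Chevalley–Eilenberg complex for `ℂP^m`

We model the free graded-commutative algebra on generators
`v_0, v_2, …, v_{2m}` (even, polynomial; `v_{2i}` has degree `2i`, weight `0`, length `1`) and
`w_{2m-1}, w_{2m+1}, …, w_{4m-1}` (odd, exterior; `w_{2m-1+2j}` has degree `2m-1+2j`,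
weight `1`, length `2`) by its monomial basis: a monomial is a pair `(e, S)` where
`e : Fin (m+1) → ℕ` records the exponents of the `v`'s (`e i` is the exponent of `v_{2i}`) and
`S : Finset (Fin (m+1))` records the set of `w`'s occurring (`j ∈ S` means `w_{2m-1+2j}` occurs).
An element of the algebra is a finitely supported `ℚ`-linear combination of monomials.
The differential is the degree `+1` derivation with `∂ v_{2i} = 0` and
`∂ w_{2i-1} = ∑_{a+b=i, 0 ≤ a,b ≤ m} v_{2a} v_{2b}` (for `m ≤ i ≤ 2m`), with the usual
Koszul signs.
-/

noncomputable section

/-- Monomials: exponents of the even generators `v_{2i}` and the set of odd generators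
`w_{2m-1+2j}` occurring. -/
abbrev CEMon (m : ℕ) : Type := (Fin (m + 1) → ℕ) × Finset (Fin (m + 1))

/-- The underlying `ℚ`-vector space of the Chevalley–Eilenberg algebra for `ℂP^m`:
finitely supported linear combinations of monomials. -/
abbrev CEAlg (m : ℕ) : Type := CEMon m →₀ ℚ

/-- Cohomological degree of a monomial: `v_{2i}` has degree `2i` and `w_{2m-1+2j}` has
degree `2m - 1 + 2j`. -/
def CEdeg (m : ℕ) (b : CEMon m) : ℕ :=
  (∑ i : Fin (m + 1), 2 * i.val * b.1 i) + ∑ j ∈ b.2, (2 * m + 2 * j.val - 1)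

/-- Length of a monomial: each `v` has length `1`, each `w` has length `2`. -/
def CElen (m : ℕ) (b : CEMon m) : ℕ := (∑ i : Fin (m + 1), b.1 i) + 2 * b.2.card

/-- Weight of a monomial: each `v` has weight `0`, each `w` has weight `1`. -/
def CEwt (m : ℕ) (b : CEMon m) : ℕ := b.2.card

/-- The differential on a monomial: apply `∂ w_{2(m+j)-1} = ∑_{a+b=m+j, 0 ≤ a,b ≤ m} v_{2a} v_{2b}`
to each odd factor in turn, with the Koszul sign `(-1)^{#{l ∈ S | l < j}}` (writing the odd
factors in increasing order). -/
def CEdMon (m : ℕ) (b : CEMon m) : CEAlg m :=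
  ∑ j ∈ b.2, ∑ a : Fin (m + 1),
    if h : j.val ≤ a.val then
      Finsupp.single
        (b.1 + Pi.single a 1 + Pi.single (⟨m + j.val - a.val, by omega⟩ : Fin (m + 1)) 1,
          b.2.erase j)
        ((-1 : ℚ) ^ (b.2.filter (fun l => l < j)).card)
    else 0

/-- The Chevalley–Eilenberg differential `∂`, as a linear map. -/
def CEd (m : ℕ) : CEAlg m →ₗ[ℚ] CEAlg m :=
  Finsupp.lift (CEAlg m) ℚ (CEMon m) (CEdMon m)

/-- `Ω_k^{i,ω}(ℂP^m)`: the span of the monomials of length `k`, cohomological degree `i` and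
weight `ω`. -/
def CEOmega (m k i ω : ℕ) : Submodule ℚ (CEAlg m) :=
  Finsupp.supported ℚ ℚ {b : CEMon m | CElen m b = k ∧ CEdeg m b = i ∧ CEwt m b = ω}

/-- A monomial is *bad* if it is divisible by `v_{2m}²` or by `w_{4m-1}`. -/
def CEBad (m : ℕ) (b : CEMon m) : Prop :=
  2 ≤ b.1 (Fin.last m) ∨ Fin.last m ∈ b.2

open Classical in
/-- The projection of the Chevalley–Eilenberg algebra onto the span of the *good* monomials
(those not divisible by `v_{2m}²` nor by `w_{4m-1}`), annihilating the bad monomials.  The span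
of the good monomials is canonically identified with the quotient of the algebra by the span of
the bad monomials. -/
def CEproj (m : ℕ) : CEAlg m →ₗ[ℚ] CEAlg m :=
  Finsupp.lift (CEAlg m) ℚ (CEMon m)
    (fun b => if CEBad m b then 0 else Finsupp.single b (1 : ℚ))

/-- The induced differential on the reduced complex `ʳΩ` (realized as the span of the good
monomials, canonically identified with the quotient by the span of the bad monomials). -/
def CErd (m : ℕ) : CEAlg m →ₗ[ℚ] CEAlg m := (CEproj m).comp (CEd m)

/-- `ʳΩ_k^{i,ω}(ℂP^m)`: the reduced complex (the quotient of `Ω_k^{i,ω}(ℂP^m)` by the span of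
the bad monomials, realized as the span of the good monomials of length `k`, degree `i` and
weight `ω`). -/
def CErOmega (m k i ω : ℕ) : Submodule ℚ (CEAlg m) :=
  Finsupp.supported ℚ ℚ
    {b : CEMon m | ¬ CEBad m b ∧ CElen m b = k ∧ CEdeg m b = i ∧ CEwt m b = ω}

/-- The degree-`i` part of the reduced complex `ʳΩ_k^{*,*}(ℂP^m)` (all weights together). -/
def CErOmegaDeg (m k i : ℕ) : Submodule ℚ (CEAlg m) :=
  Finsupp.supported ℚ ℚ {b : CEMon m | ¬ CEBad m b ∧ CElen m b = k ∧ CEdeg m b = i}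

/-- Cocycles of degree `i` in the reduced complex `ʳΩ_k^{*,*}(ℂP^m)`. -/
def CErCocycles (m k i : ℕ) : Submodule ℚ (CEAlg m) :=
  CErOmegaDeg m k i ⊓ LinearMap.ker (CErd m)

/-- The degree-`i` cohomology of the reduced complex `ʳΩ_k^{*,*}(ℂP^m)`:
cocycles of degree `i` modulo the image of the degree-`(i-1)` part under the differential. -/
abbrev CErCohomology (m k i : ℕ) : Type :=
  CErCocycles m k i ⧸
    Submodule.comap (CErCocycles m k i).subtype
      (Submodule.map (CErd m) (CErOmegaDeg m k (i - 1)))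

end

noncomputable section

open Classical

lemma CEd_single' (m : ℕ) (b : CEMon m) (c : ℚ) :
    CEd m (Finsupp.single b c) = c • CEdMon m b := by
  rw [CEd, Finsupp.lift_apply, Finsupp.sum_single_index (by simp)]

lemma CEproj_single' (m : ℕ) (b : CEMon m) (c : ℚ) :
    CEproj m (Finsupp.single b c) =
      if CEBad m b then 0 else Finsupp.single b c := by
  rw [CEproj, Finsupp.lift_apply, Finsupp.sum_single_index (by simp)]
  split_ifs with h
  · simp
  · simp [Finsupp.smul_single]

/-- Auxiliary third index. -/
def Ebv (m : ℕ) (j a : Fin (m + 1)) : Fin (m + 1) :=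
  ⟨m - (j.val + a.val - m), by omega⟩

def Emon (m : ℕ) (j a : Fin (m + 1)) : CEMon m :=
  (Pi.single j 1 + Pi.single a 1 + Pi.single (Ebv m j a) 1, ∅)

def Cnd (m : ℕ) (j a : Fin (m + 1)) : Prop :=
  m ≤ j.val + a.val ∧ ¬ CEBad m (Emon m j a)

lemma Ebv_symm (m : ℕ) (j a : Fin (m + 1)) : Ebv m j a = Ebv m a j := by
  simp only [Ebv, Fin.mk.injEq]; omega

lemma Emon_symm (m : ℕ) (j a : Fin (m + 1)) : Emon m j a = Emon m a j := by
  simp only [Emon, Ebv_symm m j a, Prod.mk.injEq, and_true]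
  abel

lemma Cnd_symm (m : ℕ) (j a : Fin (m + 1)) : Cnd m j a ↔ Cnd m a j := by
  unfold Cnd
  rw [Emon_symm]
  constructor <;> rintro ⟨h1, h2⟩ <;> exact ⟨by omega, h2⟩

lemma Ebv_invol (m : ℕ) (j a : Fin (m + 1)) (h : m ≤ j.val + a.val) :
    Ebv m (Ebv m j a) a = j := by
  have hj := j.isLt
  have ha := a.isLt
  apply Fin.ext
  show m - ((m - (j.val + a.val - m)) + a.val - m) = j.val
  omega

lemma Emon_tau (m : ℕ) (j a : Fin (m + 1)) (h : m ≤ j.val + a.val) :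
    Emon m (Ebv m j a) a = Emon m j a := by
  simp only [Emon, Ebv_invol m j a h, Prod.mk.injEq, and_true]
  abel

lemma Cnd_tau (m : ℕ) (j a : Fin (m + 1)) (h : Cnd m j a) :
    Cnd m (Ebv m j a) a := by
  obtain ⟨h1, h2⟩ := h
  have hj := j.isLt
  refine ⟨?_, ?_⟩
  · show m ≤ (m - (j.val + a.val - m)) + a.val
    omega
  · rw [Emon_tau m j a h1]; exact h2

lemma Cnd_zero (m : ℕ) (hm : 1 ≤ m) (j a : Fin (m + 1)) (hj : j.val = 0) :
    ¬ Cnd m j a := by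
  rintro ⟨h1, h2⟩
  have ha := a.isLt
  have haa : a.val = m := by omega
  apply h2
  left
  have hbv : (Ebv m j a).val = m := by show m - (j.val + a.val - m) = m; omega
  have hjne : Fin.last m ≠ j := by
    intro h; rw [← h] at hj; simp [Fin.last] at hj; omega
  have haeq : a = Fin.last m := Fin.ext (by simp [Fin.last, haa])
  have hbveq : Ebv m j a = Fin.last m := Fin.ext (by simp [Fin.last, hbv])
  show 2 ≤ (Emon m j a).1 (Fin.last m)
  have : (Emon m j a).1 (Fin.last m) = 2 := by
    unfold Emon
    rw [hbveq, haeq]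
    simp [Pi.single_eq_of_ne hjne, Pi.single_eq_same]
  omega

end

/-- For every `m ≥ 4`, the element
`α = ∑_{j=1}^{m} (2m - 3j) · v_{2j} · w_{4m-(2j+1)}` of `ʳΩ_3^{4m-1,1}(ℂP^m)` is a cocycle:
`∂(α) = 0` in the reduced complex `ʳΩ_3^{*,*}(ℂP^m)`.  (The monomial
`v_{2j} w_{4m-2j-1}` is `(Pi.single j 1, {m - j})`, since `w_{4m-2j-1} = w_{2m-1+2(m-j)}`.) -/
theorem alpha_is_cocycle (m : ℕ) (hm : 4 ≤ m) :
    (∑ j : Fin (m + 1), if j.val = 0 then 0 else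
        Finsupp.single
          ((Pi.single j 1 : Fin (m + 1) → ℕ), {(⟨m - j.val, by omega⟩ : Fin (m + 1))})
          ((2 * m : ℚ) - 3 * j.val))
      ∈ CErOmega m 3 (4 * m - 1) 1 ∧
    CErd m
      (∑ j : Fin (m + 1), if j.val = 0 then 0 else
        Finsupp.single
          ((Pi.single j 1 : Fin (m + 1) → ℕ), {(⟨m - j.val, by omega⟩ : Fin (m + 1))})
          ((2 * m : ℚ) - 3 * j.val)) = 0 := by
  classical
  constructor
  · -- membership
    apply Submodule.sum_mem
    intro j _
    split_ifs with hj0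
    · exact Submodule.zero_mem _
    · apply Finsupp.single_mem_supported
      have hj := j.isLt
      refine ⟨?_, ?_, ?_, ?_⟩
      · rintro (h | h)
        · revert h
          rcases eq_or_ne j (Fin.last m) with h | h
          · rw [h]; simp [Pi.single_eq_same]
          · simp [Pi.single_eq_of_ne (Ne.symm h)]
        · simp only [Finset.mem_singleton] at h
          have := congrArg Fin.val h
          simp [Fin.last] at this
          omega
      · unfold CElen
        rw [Finset.sum_pi_single']
        simp
      · unfold CEdeg
        rw [Fintype.sum_eq_single j (fun i hi => by simp [Pi.single_eq_of_ne hi])]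
        simp only [Pi.single_eq_same, Finset.sum_singleton]
        omega
      · unfold CEwt
        simp
  · -- differential vanishes
    rw [map_sum]
    have key : ∀ j : Fin (m + 1),
        CErd m (if j.val = 0 then 0 else
          Finsupp.single
            ((Pi.single j 1 : Fin (m + 1) → ℕ), {(⟨m - j.val, by omega⟩ : Fin (m + 1))})
            ((2 * m : ℚ) - 3 * j.val))
        = ∑ a : Fin (m + 1), if Cnd m j a then
            Finsupp.single (Emon m j a) ((2 * m : ℚ) - 3 * j.val) else 0 := by
      intro j
      have hj := j.isLt
      rcases Nat.eq_zero_or_pos j.val with hj0 | hj0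
      · rw [if_pos hj0, map_zero]
        symm
        apply Finset.sum_eq_zero
        intro a _
        rw [if_neg (Cnd_zero m (by omega) j a hj0)]
      · rw [if_neg (by omega)]
        rw [CErd, LinearMap.comp_apply, CEd_single', map_smul]
        rw [CEdMon, Finset.sum_singleton, map_sum, Finset.smul_sum]
        apply Finset.sum_congr rfl
        intro a _
        have ha := a.isLt
        by_cases hle : m - j.val ≤ a.val
        · rw [dif_pos hle]
          have hE : ((Pi.single j 1 : Fin (m + 1) → ℕ),
                ({(⟨m - j.val, by omega⟩ : Fin (m + 1))} : Finset (Fin (m+1)))).1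
                + Pi.single a 1 +
                Pi.single (⟨m + (⟨m - j.val, by omega⟩ : Fin (m + 1)).val - a.val,
                  by show m + (m - j.val) - a.val < m + 1; omega⟩ : Fin (m + 1)) 1
                = (Emon m j a).1 := by
            unfold Emon
            have : (⟨m + (⟨m - j.val, by omega⟩ : Fin (m + 1)).val - a.val,
                by show m + (m - j.val) - a.val < m + 1; omega⟩ : Fin (m + 1)) = Ebv m j a := by
              apply Fin.ext
              show m + (m - j.val) - a.val = m - (j.val + a.val - m)
              omega
            rw [this]
          have hErase : (({(⟨m - j.val, by omega⟩ : Fin (m + 1))} : Finset (Fin (m+1)))).erase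
              (⟨m - j.val, by omega⟩ : Fin (m + 1)) = (∅ : Finset (Fin (m+1))) :=
            Finset.erase_singleton _
          have hFilt : ((-1 : ℚ)) ^ ((({(⟨m - j.val, by omega⟩ : Fin (m + 1))} :
              Finset (Fin (m+1)))).filter
              (fun l => l < (⟨m - j.val, by omega⟩ : Fin (m + 1)))).card = 1 := by
            rw [Finset.filter_singleton, if_neg (lt_irrefl _)]
            simp
          rw [hFilt, hErase, hE]
          have hEp : ((Emon m j a).1, (∅ : Finset (Fin (m+1)))) = Emon m j a := rfl
          rw [hEp, CEproj_single']
          have hCnd : Cnd m j a ↔ ¬ CEBad m (Emon m j a) := by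
            constructor
            · exact fun h => h.2
            · exact fun h => ⟨by omega, h⟩
          by_cases hbad : CEBad m (Emon m j a)
          · rw [if_pos hbad, if_neg (fun h => (hCnd.mp h) hbad), smul_zero]
          · rw [if_neg hbad, if_pos (hCnd.mpr hbad), Finsupp.smul_single, smul_eq_mul,
              mul_one]
        · rw [dif_neg hle, map_zero, smul_zero,
            if_neg (fun h => hle (by have := h.1; omega))]
    rw [Finset.sum_congr rfl fun j _ => key j]
    -- now the symmetry argument
    set S := ∑ j : Fin (m + 1), ∑ a : Fin (m + 1),
        (if Cnd m j a then Finsupp.single (Emon m j a) ((2 * m : ℚ) - 3 * j.val) else 0)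
      with hS
    have h1 : S = ∑ j : Fin (m + 1), ∑ a : Fin (m + 1),
        (if Cnd m j a then Finsupp.single (Emon m j a) ((2 * m : ℚ) - 3 * a.val) else 0) := by
      rw [hS, Finset.sum_comm]
      refine Finset.sum_congr rfl fun j _ => Finset.sum_congr rfl fun a _ => ?_
      exact if_congr (Cnd_symm m a j) (by rw [Emon_symm m a j]) rfl
    have h2 : S = ∑ j : Fin (m + 1), ∑ a : Fin (m + 1),
        (if Cnd m j a then
          Finsupp.single (Emon m j a) ((2 * m : ℚ) - 3 * (Ebv m j a).val) else 0) := by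
      rw [hS, Finset.sum_comm]
      conv_rhs => rw [Finset.sum_comm]
      refine Finset.sum_congr rfl fun a _ => ?_
      rw [← Finset.sum_filter, ← Finset.sum_filter]
      refine Finset.sum_nbij' (fun j => Ebv m j a) (fun j => Ebv m j a) ?_ ?_ ?_ ?_ ?_
      · intro j hjm
        simp only [Finset.mem_filter, Finset.mem_univ, true_and] at hjm ⊢
        exact Cnd_tau m j a hjm
      · intro j hjm
        simp only [Finset.mem_filter, Finset.mem_univ, true_and] at hjm ⊢
        exact Cnd_tau m j a hjm
      · intro j hjm
        simp only [Finset.mem_filter, Finset.mem_univ, true_and] at hjm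
        exact Ebv_invol m j a hjm.1
      · intro j hjm
        simp only [Finset.mem_filter, Finset.mem_univ, true_and] at hjm
        exact Ebv_invol m j a hjm.1
      · intro j hjm
        simp only [Finset.mem_filter, Finset.mem_univ, true_and] at hjm
        rw [Emon_tau m j a hjm.1, Ebv_invol m j a hjm.1]
    have h3 : S + S + S = 0 := by
      nth_rewrite 2 [h1]
      nth_rewrite 2 [h2]
      rw [hS, ← Finset.sum_add_distrib, ← Finset.sum_add_distrib]
      apply Finset.sum_eq_zero
      intro j _
      rw [← Finset.sum_add_distrib, ← Finset.sum_add_distrib]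
      apply Finset.sum_eq_zero
      intro a _
      by_cases hc : Cnd m j a
      · rw [if_pos hc, if_pos hc, if_pos hc, ← Finsupp.single_add, ← Finsupp.single_add]
        have hj := j.isLt
        have ha := a.isLt
        have hbv : j.val + a.val + (Ebv m j a).val = 2 * m := by
          have h1 := hc.1
          show j.val + a.val + (m - (j.val + a.val - m)) = 2 * m
          omega
        have : ((2 * m : ℚ) - 3 * j.val) + ((2 * m : ℚ) - 3 * a.val)
            + ((2 * m : ℚ) - 3 * (Ebv m j a).val) = 0 := by
          have : (j.val : ℚ) + a.val + (Ebv m j a).val = 2 * m := by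
            exact_mod_cast congrArg (Nat.cast : ℕ → ℚ) hbv
          linarith
        rw [this, Finsupp.single_zero]
      · rw [if_neg hc, if_neg hc, if_neg hc, add_zero, add_zero]
    have h4 : (3 : ℚ) • S = 0 := by
      rw [show (3 : ℚ) = 1 + 1 + 1 by norm_num, add_smul, add_smul, one_smul]
      exact h3
    have := smul_eq_zero.mp h4
    rcases this with h | h
    · norm_num at h
    · exact h
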